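/- Let X be a Banach space, t ↦ L_t an L-Lipschitz map from [0,τ] into B(X), and T_{[t,s]} a propagator for the family (L_t). Then for all t and δ ≥ 0 with t + δ ≤ τ, the identity T_{[t+δ,t]} − e^{δ L_t} = ∫_t^{t+δ} T_{[t+δ,r]} (L_r − L_t) e^{(r−t) L_t} dr holds (integral in operator norm), and consequently ‖T_{[t+δ,t]} − e^{δ L_t}‖ ≤ L δ²/2 provided ‖e^{r L_t}‖ ≤ 1 for all r ≥ 0. -/

import Mathlib

/-!
Put `F r = T_{[b,r]} e^{(r-a)B}` with `B = L_a`. Since `∂_r T_{[b,r]} = -T_{[b,r]} L_r` and `B`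
commutes with `e^{(r-a)B}`, `F' r = -T_{[b,r]} (L_r - B) e^{(r-a)B}`, and integrating over `[a, b]`
gives the identity because `F a = T_{[b,a]}` and `F b = e^{(b-a)B}`. In the integrand the
propagator and the exponential are contractions and `‖L_r - L_a‖ ≤ L (r - a)`, which integrates
to `L (b - a)² / 2`.
-/

open Set NormedSpace MeasureTheory

section Duhamel

variable {𝔸 : Type*} [NormedRing 𝔸] [NormedAlgebra ℝ 𝔸] [CompleteSpace 𝔸]

theorem hasDerivAt_exp_sub_smul (B : 𝔸) (a r : ℝ) :
    HasDerivAt (fun u : ℝ => exp ((u - a) • B)) (exp ((r - a) • B) * B) r := by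
  simpa only [Function.comp_def, id_eq, one_smul] using
    (hasDerivAt_exp_smul_const (𝕂 := ℝ) B (r - a)).scomp r ((hasDerivAt_id r).sub_const a)

theorem hasDerivWithinAt_mul_exp_sub_smul {P A : ℝ → 𝔸} {B : 𝔸} {s : Set ℝ} {a r : ℝ}
    (hP : HasDerivWithinAt P (-(P r * A r)) s r) :
    HasDerivWithinAt (fun u => P u * exp ((u - a) • B))
      (-(P r * (A r - B) * exp ((r - a) • B))) s r := by
  have hcomm : exp ((r - a) • B) * B = B * exp ((r - a) • B) :=
    ((Commute.refl B).smul_left (r - a)).exp_left.eq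
  refine (hP.fun_mul (hasDerivAt_exp_sub_smul B a r).hasDerivWithinAt).congr_deriv ?_
  rw [hcomm]
  noncomm_ring

theorem sub_exp_smul_eq_integral {P A : ℝ → 𝔸} {B : 𝔸} {a b : ℝ} (hab : a ≤ b)
    (hP : ∀ r ∈ Icc a b, HasDerivWithinAt P (-(P r * A r)) (Icc a b) r)
    (hA : ContinuousOn A (Icc a b)) (hPb : P b = 1) :
    P a - exp ((b - a) • B) = ∫ r in a..b, P r * (A r - B) * exp ((r - a) • B) := by
  have hF r (hr : r ∈ Icc a b) := hasDerivWithinAt_mul_exp_sub_smul (a := a) (B := B) (hP r hr)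
  have hPcont : ContinuousOn P (Icc a b) := fun r hr => (hP r hr).continuousWithinAt
  have hint :
      IntervalIntegrable (fun r => P r * (A r - B) * exp ((r - a) • B)) volume a b := by
    refine ContinuousOn.intervalIntegrable ?_
    rw [uIcc_of_le hab]
    exact (hPcont.mul (hA.sub continuousOn_const)).mul
      (fun r _ => (hasDerivAt_exp_sub_smul B a r).continuousAt.continuousWithinAt)
  have hFTC := intervalIntegral.integral_eq_sub_of_hasDerivAt_of_le hab
    (fun r hr => (hF r hr).continuousWithinAt)
    (fun r hr => (hF r (Ioo_subset_Icc_self hr)).hasDerivAt (Icc_mem_nhds hr.1 hr.2)) hint.neg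
  simp only [intervalIntegral.integral_neg, sub_self, zero_smul, exp_zero, mul_one, hPb,
    one_mul] at hFTC
  rw [← neg_sub, ← hFTC, neg_neg]

end Duhamel

theorem intervalIntegral.norm_integral_le_of_norm_le_mul_sub {E : Type*} [NormedAddCommGroup E]
    [NormedSpace ℝ E] {f : ℝ → E} {a b L : ℝ} (hab : a ≤ b)
    (hf : ∀ r ∈ Ioc a b, ‖f r‖ ≤ L * (r - a)) :
    ‖∫ r in a..b, f r‖ ≤ L * (b - a) ^ 2 / 2 := by
  calc ‖∫ r in a..b, f r‖ ≤ ∫ r in a..b, L * (r - a) :=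
        norm_integral_le_of_norm_le hab (.of_forall hf)
          ((by fun_prop : Continuous _).intervalIntegrable _ _)
    _ = L * (b - a) ^ 2 / 2 := by
        rw [integral_const_mul, integral_comp_sub_right (fun x => x), integral_id]
        ring

theorem propagator_duhamel_identity_general
    {X : Type*} [NormedAddCommGroup X] [NormedSpace ℝ X] [CompleteSpace X]
    (τ : ℝ)
    (L : ℝ) (A : ℝ → X →L[ℝ] X)
    (hLip : ∀ t ∈ Set.Icc (0 : ℝ) τ, ∀ s ∈ Set.Icc (0 : ℝ) τ, ‖A t - A s‖ ≤ L * |t - s|)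
    (T : ℝ → ℝ → X →L[ℝ] X)
    (hTnorm : ∀ s t : ℝ, 0 ≤ s → s ≤ t → t ≤ τ → ‖T t s‖ ≤ 1)
    (hTid : ∀ t ∈ Set.Icc (0 : ℝ) τ, T t t = 1)
    (hTderiv : ∀ t ∈ Set.Icc (0 : ℝ) τ, ∀ s ∈ Set.Icc (0 : ℝ) t,
      HasDerivWithinAt (fun u => T t u) (-(T t s * A s)) (Set.Icc (0 : ℝ) t) s) :
    ∀ t δ : ℝ, 0 ≤ t → 0 ≤ δ → t + δ ≤ τ →
      (T (t + δ) t - NormedSpace.exp (δ • A t) =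
        ∫ r in t..(t + δ), T (t + δ) r * (A r - A t) * NormedSpace.exp ((r - t) • A t)) ∧
      ((∀ r : ℝ, 0 ≤ r → ‖NormedSpace.exp (r • A t)‖ ≤ 1) →
        ‖T (t + δ) t - NormedSpace.exp (δ • A t)‖ ≤ L * δ ^ 2 / 2) := by
  intro t δ ht hδ htδ
  have hsub : Icc t (t + δ) ⊆ Icc 0 τ := Icc_subset_Icc ht htδ
  have hend : t + δ ∈ Icc 0 τ := ⟨by linarith, htδ⟩
  have hAcont : ContinuousOn A (Icc 0 τ) :=
    (LipschitzOnWith.of_dist_le' fun x hx y hy => by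
      simpa only [dist_eq_norm, Real.norm_eq_abs] using hLip x hx y hy).continuousOn
  have hduhamel := sub_exp_smul_eq_integral (B := A t) (by linarith : t ≤ t + δ)
    (fun r hr => (hTderiv _ hend r ⟨ht.trans hr.1, hr.2⟩).mono (Icc_subset_Icc ht le_rfl))
    (hAcont.mono hsub) (hTid _ hend)
  rw [add_sub_cancel_left] at hduhamel
  refine ⟨hduhamel, fun hexp => ?_⟩
  have hintegrand : ∀ r ∈ Ioc t (t + δ),
      ‖T (t + δ) r * (A r - A t) * exp ((r - t) • A t)‖ ≤ L * (r - t) := by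
    intro r hr
    replace hr : r ∈ Icc t (t + δ) := Ioc_subset_Icc_self hr
    have hLr : ‖A r - A t‖ ≤ L * (r - t) := by
      simpa only [abs_of_nonneg (sub_nonneg.2 hr.1)] using
        hLip r (hsub hr) t (hsub (left_mem_Icc.2 (by linarith)))
    calc _ ≤ ‖T (t + δ) r‖ * ‖A r - A t‖ * ‖exp ((r - t) • A t)‖ := norm_mul₃_le
      _ ≤ 1 * (L * (r - t)) * 1 := by
          gcongr
          · linarith [norm_nonneg (A r - A t)]
          · exact hTnorm r (t + δ) (ht.trans hr.1) hr.2 htδ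
          · exact hexp _ (sub_nonneg.2 hr.1)
      _ = L * (r - t) := by ring
  simpa only [hduhamel, add_sub_cancel_left] using
    intervalIntegral.norm_integral_le_of_norm_le_mul_sub (by linarith) hintegrand

/-- **Duhamel-type identity for the propagator.**
If `t ↦ A t` is an `L`-Lipschitz family on `[0, τ]` and `T t s` a propagator for it, then
`T (t+δ) t − e^{δ A t} = ∫_t^{t+δ} T (t+δ) r (A r − A t) e^{(r−t) A t} dr`, and if moreover
`‖e^{r A t}‖ ≤ 1` for all `r ≥ 0`, then `‖T (t+δ) t − e^{δ A t}‖ ≤ L δ²/2`. -/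
theorem propagator_duhamel_identity
    {X : Type*} [NormedAddCommGroup X] [NormedSpace ℝ X] [CompleteSpace X]
    (τ : ℝ) (hτ : 0 ≤ τ)
    (L : ℝ) (A : ℝ → X →L[ℝ] X)
    (hLip : ∀ t ∈ Set.Icc (0 : ℝ) τ, ∀ s ∈ Set.Icc (0 : ℝ) τ, ‖A t - A s‖ ≤ L * |t - s|)
    (T : ℝ → ℝ → X →L[ℝ] X)
    (hTnorm : ∀ s t : ℝ, 0 ≤ s → s ≤ t → t ≤ τ → ‖T t s‖ ≤ 1)
    (hTid : ∀ t ∈ Set.Icc (0 : ℝ) τ, T t t = 1)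
    (hTcomp : ∀ s r t : ℝ, 0 ≤ s → s ≤ r → r ≤ t → t ≤ τ → T t r * T r s = T t s)
    (hTderiv : ∀ t ∈ Set.Icc (0 : ℝ) τ, ∀ s ∈ Set.Icc (0 : ℝ) t,
      HasDerivWithinAt (fun u => T t u) (-(T t s * A s)) (Set.Icc (0 : ℝ) t) s) :
    ∀ t δ : ℝ, 0 ≤ t → 0 ≤ δ → t + δ ≤ τ →
      (T (t + δ) t - NormedSpace.exp (δ • A t) =
        ∫ r in t..(t + δ), T (t + δ) r * (A r - A t) * NormedSpace.exp ((r - t) • A t)) ∧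
      ((∀ r : ℝ, 0 ≤ r → ‖NormedSpace.exp (r • A t)‖ ≤ 1) →
        ‖T (t + δ) t - NormedSpace.exp (δ • A t)‖ ≤ L * δ ^ 2 / 2) :=
  propagator_duhamel_identity_general τ L A hLip T hTnorm hTid hTderiv
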